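/- Let π ∈ S_n and let Γ(π) = (d,l). Then π avoids the classical pattern 132 if and only if l = (0,0,…,0). -/

import Mathlib

open scoped Classical

noncomputable section

/-- Steps of a Motzkin path: up, down, horizontal. -/
inductive Step : Type
  | U : Step
  | D : Step
  | H : Step
  deriving DecidableEq

/-- Steps of a bicolored Motzkin path: up, down, horizontal of color `c₁`,
horizontal of color `c₂`. -/
inductive CStep : Type
  | U : CStep
  | D : CStep
  | H : CStep
  | Ht : CStep
  deriving DecidableEq

/-- A word over `{U,D,H}` is a Motzkin word if the numbers of `U`'s and `D`'s agree
and every prefix has at least as many `U`'s as `D`'s. -/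
def IsMotzkin (w : List Step) : Prop :=
  w.count Step.U = w.count Step.D ∧
  ∀ k, (w.take k).count Step.D ≤ (w.take k).count Step.U

/-- The `y`-coordinate of the lattice point reached after the first `i` steps. -/
def levelAt (w : List Step) (i : ℕ) : ℕ :=
  (w.take i).count Step.U - (w.take i).count Step.D

/-- The height of the `i`-th step (0-indexed): the `y`-coordinate of its ending
point for a down step, of its starting point otherwise. -/
def heightAt (w : List Step) (i : ℕ) : ℕ :=
  if w.getD i Step.H = Step.D then levelAt w (i + 1) else levelAt w i

/-- Twice the area between the path and the `x`-axis (trapezoid rule). -/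
def twoArea (w : List Step) : ℕ :=
  ∑ i ∈ Finset.range w.length, (levelAt w i + levelAt w (i + 1))

/-- The number of occurrences of `p` as a factor (subword of consecutive letters) of `w`. -/
def occFactor (p w : List Step) : ℕ :=
  ((Finset.range w.length).filter fun i => p <+: w.drop i).card

/-- The `y`-coordinate reached after `i` steps, bicolored version. -/
def cLevelAt (w : List CStep) (i : ℕ) : ℕ :=
  (w.take i).count CStep.U - (w.take i).count CStep.D

/-- The height of the `i`-th step, bicolored version. -/
def cHeightAt (w : List CStep) (i : ℕ) : ℕ :=
  if w.getD i CStep.H = CStep.D then cLevelAt w (i + 1) else cLevelAt w i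

/-- A bicolored Motzkin word: a Motzkin word whose horizontal steps have two possible
colors (`H` and `Ht`), horizontal steps at height `0` not being allowed to have the
second color. -/
def IsBicoloredMotzkin (w : List CStep) : Prop :=
  w.count CStep.U = w.count CStep.D ∧
  (∀ k, (w.take k).count CStep.D ≤ (w.take k).count CStep.U) ∧
  (∀ i < w.length, w.getD i CStep.H = CStep.Ht → cHeightAt w i ≠ 0)

/-- A histoire de Laguerre of length `n`: a bicolored Motzkin path of length `n`
together with a sequence `l` of nonnegative integers such that `l i ≤ h i` for each
step, the inequality being strict for the horizontal steps of the second color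
(the "suitable constraints" of De Medicis and Viennot). -/
def IsLaguerre (n : ℕ) (dl : List CStep × List ℕ) : Prop :=
  dl.1.length = n ∧ dl.2.length = n ∧ IsBicoloredMotzkin dl.1 ∧
  ∀ i < n, dl.2.getD i 0 ≤ cHeightAt dl.1 i ∧
    (dl.1.getD i CStep.H = CStep.Ht → dl.2.getD i 0 < cHeightAt dl.1 i)

/-- A labelled Motzkin path of length `n`: a Motzkin path whose down steps carry a
label not exceeding their height, all other steps carrying the label `0` (unlabelled). -/
def IsLabelledMotzkin (n : ℕ) (dl : List Step × List ℕ) : Prop :=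
  dl.1.length = n ∧ dl.2.length = n ∧ IsMotzkin dl.1 ∧
  ∀ i < n, (dl.1.getD i Step.H = Step.D → dl.2.getD i 0 ≤ heightAt dl.1 i) ∧
    (dl.1.getD i Step.H ≠ Step.D → dl.2.getD i 0 = 0)

/-- The embedding of plain Motzkin steps into bicolored steps. -/
def Step.toC : Step → CStep
  | Step.U => CStep.U
  | Step.D => CStep.D
  | Step.H => CStep.H

/-- The value (as a natural number, 0-indexed) of the permutation `π` at the
(0-indexed) position `i`; junk value `0` out of range. -/
def pv {n : ℕ} (π : Equiv.Perm (Fin n)) (i : ℕ) : ℕ :=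
  if h : i < n then (π ⟨i, h⟩ : Fin n).val else 0

/-- Position `p` starts an ascending run of `π` (in one-line notation):
either `p = 0` or there is a descent just before `p`. -/
def RunStartAt {n : ℕ} (π : Equiv.Perm (Fin n)) (p : Fin n) : Prop :=
  ∀ q : Fin n, (q : ℕ) + 1 = (p : ℕ) → π p < π q

/-- Position `p` ends an ascending run of `π`. -/
def RunEndAt {n : ℕ} (π : Equiv.Perm (Fin n)) (p : Fin n) : Prop :=
  ∀ q : Fin n, (p : ℕ) + 1 = (q : ℕ) → π q < π p

/-- The step of the bicolored Motzkin path `Γ(π)` associated with the value `v`: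
`U` if `v` is a head, `D` if it is a tail, `H` if it is a head-tail, `Ht` if it
is a boarder. -/
def gammaStep {n : ℕ} (π : Equiv.Perm (Fin n)) (v : Fin n) : CStep :=
  if RunStartAt π (π.symm v) then
    if RunEndAt π (π.symm v) then CStep.H else CStep.U
  else
    if RunEndAt π (π.symm v) then CStep.D else CStep.Ht

/-- The label of `Γ(π)` at the value `v`: the number of ascending runs of `π`
(determined by the position `pq.1` of their first element and the position `pq.2`
of their last element) whose first value is `< v`, whose last value is `> v`, and
whose last element precedes `v` in `π`. -/
def gammaLabel {n : ℕ} (π : Equiv.Perm (Fin n)) (v : Fin n) : ℕ :=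
  (Finset.univ.filter fun pq : Fin n × Fin n =>
    RunStartAt π pq.1 ∧ RunEndAt π pq.2 ∧ pq.1 ≤ pq.2 ∧
    (∀ r : Fin n, pq.1 ≤ r → r < pq.2 → ¬ RunEndAt π r) ∧
    π pq.1 < v ∧ v < π pq.2 ∧ pq.2 < π.symm v).card

/-- The map `Γ` from permutations to pairs (bicolored Motzkin path, label sequence). -/
def Gamma {n : ℕ} (π : Equiv.Perm (Fin n)) : List CStep × List ℕ :=
  (List.ofFn fun v => gammaStep π v, List.ofFn fun v => gammaLabel π v)

/-- The (uncolored) Motzkin path `Γ(π)` for permutations with no boarders: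
`U` for heads, `D` for tails, `H` for head-tails. -/
def gammaPath {n : ℕ} (π : Equiv.Perm (Fin n)) : List Step :=
  List.ofFn fun v : Fin n =>
    if RunStartAt π (π.symm v) then
      if RunEndAt π (π.symm v) then Step.H else Step.U
    else
      if RunEndAt π (π.symm v) then Step.D else Step.H

/-- `π` is an involution. -/
def IsInvolution {n : ℕ} (π : Equiv.Perm (Fin n)) : Prop :=
  ∀ x, π (π x) = x

/-- The Motzkin path `Ψ(π)` of an involution `π`: `H` at fixed points, `U` at the
smaller element of a 2-cycle, `D` at the larger element of a 2-cycle. -/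
def psiWord {n : ℕ} (π : Equiv.Perm (Fin n)) : List Step :=
  List.ofFn fun v : Fin n =>
    if π v = v then Step.H else if v < π v then Step.U else Step.D

/-- The label of `Ψ(π)` at `v`: if `v` is the larger element of a 2-cycle
`(π v, v)`, the number of 2-cycles `(x, π x)` with `π v < x < v < π x`; `0` otherwise. -/
def psiLabel {n : ℕ} (π : Equiv.Perm (Fin n)) (v : Fin n) : ℕ :=
  if π v < v then
    (Finset.univ.filter fun x : Fin n => π v < x ∧ x < v ∧ v < π x).card
  else 0

/-- The map `Ψ` from involutions to labelled Motzkin paths. -/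
def Psi {n : ℕ} (π : Equiv.Perm (Fin n)) : List Step × List ℕ :=
  (psiWord π, List.ofFn fun v => psiLabel π v)

/-- Number of inversions of `π`. -/
def invCount {n : ℕ} (π : Equiv.Perm (Fin n)) : ℕ :=
  (Finset.univ.filter fun p : Fin n × Fin n => p.1 < p.2 ∧ π p.2 < π p.1).card

/-- Number of coinversions of `π`. -/
def coinvCount {n : ℕ} (π : Equiv.Perm (Fin n)) : ℕ :=
  (Finset.univ.filter fun p : Fin n × Fin n => p.1 < p.2 ∧ π p.1 < π p.2).card

/-- Number of descents of `π`. -/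
def desCount {n : ℕ} (π : Equiv.Perm (Fin n)) : ℕ :=
  ((Finset.range (n - 1)).filter fun i => pv π (i + 1) < pv π i).card

/-- Number of ascents of `π`. -/
def ascCount {n : ℕ} (π : Equiv.Perm (Fin n)) : ℕ :=
  ((Finset.range (n - 1)).filter fun i => pv π i < pv π (i + 1)).card

/-- Number of fixed points of `π`. -/
def fixCount {n : ℕ} (π : Equiv.Perm (Fin n)) : ℕ :=
  (Finset.univ.filter fun i : Fin n => π i = i).card

/-- Number of occurrences of the consecutive pattern 123 in `π`. -/
def occC123 {n : ℕ} (π : Equiv.Perm (Fin n)) : ℕ :=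
  ((Finset.range (n - 2)).filter fun i =>
    pv π i < pv π (i + 1) ∧ pv π (i + 1) < pv π (i + 2)).card

/-- Number of occurrences of the consecutive pattern 132 in `π`. -/
def occC132 {n : ℕ} (π : Equiv.Perm (Fin n)) : ℕ :=
  ((Finset.range (n - 2)).filter fun i =>
    pv π i < pv π (i + 2) ∧ pv π (i + 2) < pv π (i + 1)).card

/-- Number of occurrences of the consecutive pattern 213 in `π`. -/
def occC213 {n : ℕ} (π : Equiv.Perm (Fin n)) : ℕ :=
  ((Finset.range (n - 2)).filter fun i =>
    pv π (i + 1) < pv π i ∧ pv π i < pv π (i + 2)).card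

/-- Number of occurrences of the consecutive pattern 231 in `π`. -/
def occC231 {n : ℕ} (π : Equiv.Perm (Fin n)) : ℕ :=
  ((Finset.range (n - 2)).filter fun i =>
    pv π (i + 2) < pv π i ∧ pv π i < pv π (i + 1)).card

/-- Number of occurrences of the consecutive pattern 312 in `π`. -/
def occC312 {n : ℕ} (π : Equiv.Perm (Fin n)) : ℕ :=
  ((Finset.range (n - 2)).filter fun i =>
    pv π (i + 1) < pv π (i + 2) ∧ pv π (i + 2) < pv π i).card

/-- Number of occurrences of the consecutive pattern 321 in `π`. -/
def occC321 {n : ℕ} (π : Equiv.Perm (Fin n)) : ℕ :=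
  ((Finset.range (n - 2)).filter fun i =>
    pv π (i + 2) < pv π (i + 1) ∧ pv π (i + 1) < pv π i).card

/-- `π` contains the classical pattern 132. -/
def Contains132 {n : ℕ} (π : Equiv.Perm (Fin n)) : Prop :=
  ∃ i j k : Fin n, i < j ∧ j < k ∧ π i < π k ∧ π k < π j

/-- `π` contains the consecutive pattern 123. -/
def ContainsC123 {n : ℕ} (π : Equiv.Perm (Fin n)) : Prop :=
  ∃ i j k : Fin n, (i : ℕ) + 1 = (j : ℕ) ∧ (j : ℕ) + 1 = (k : ℕ) ∧ π i < π j ∧ π j < π k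

/-- `π` contains the classical pattern 3412. -/
def Contains3412 {n : ℕ} (π : Equiv.Perm (Fin n)) : Prop :=
  ∃ i₁ i₂ i₃ i₄ : Fin n, i₁ < i₂ ∧ i₂ < i₃ ∧ i₃ < i₄ ∧
    π i₃ < π i₄ ∧ π i₄ < π i₁ ∧ π i₁ < π i₂

/-- `π` contains the vincular pattern 1-2̲3̲. -/
def Contains1_23 {n : ℕ} (π : Equiv.Perm (Fin n)) : Prop :=
  ∃ i j k : Fin n, i < j ∧ (j : ℕ) + 1 = (k : ℕ) ∧ π i < π j ∧ π j < π k

/-- `π` contains the vincular pattern 1-3̲2̲. -/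
def Contains1_32 {n : ℕ} (π : Equiv.Perm (Fin n)) : Prop :=
  ∃ i j k : Fin n, i < j ∧ (j : ℕ) + 1 = (k : ℕ) ∧ π i < π k ∧ π k < π j

/-- `w` is the one-line notation of a permutation of `{0, …, n-1}`. -/
def IsPermWord (n : ℕ) (w : List ℕ) : Prop :=
  List.Perm w (List.range n)

/-- Position `p` starts an ascending run of the word `w`. -/
def wRunStart (w : List ℕ) (p : ℕ) : Prop :=
  p = 0 ∨ w.getD p 0 < w.getD (p - 1) 0

/-- Position `p` ends an ascending run of the word `w`. -/
def wRunEnd (w : List ℕ) (p : ℕ) : Prop :=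
  p + 1 = w.length ∨ w.getD (p + 1) 0 < w.getD p 0

/-- The step of `Γ(w)` associated with the value `v`. -/
def wGammaStep (w : List ℕ) (v : ℕ) : CStep :=
  if wRunStart w (w.idxOf v) then
    if wRunEnd w (w.idxOf v) then CStep.H else CStep.U
  else
    if wRunEnd w (w.idxOf v) then CStep.D else CStep.Ht

/-- The label of `Γ(w)` at the value `v`. -/
def wGammaLabel (w : List ℕ) (v : ℕ) : ℕ :=
  ((Finset.range w.length ×ˢ Finset.range w.length).filter fun pq =>
    wRunStart w pq.1 ∧ wRunEnd w pq.2 ∧ pq.1 ≤ pq.2 ∧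
    (∀ r, pq.1 ≤ r → r < pq.2 → ¬ wRunEnd w r) ∧
    w.getD pq.1 0 < v ∧ v < w.getD pq.2 0 ∧ pq.2 < w.idxOf v).card

/-- The map `Γ` on one-line words. -/
def wGamma (w : List ℕ) : List CStep × List ℕ :=
  ((List.range w.length).map (wGammaStep w), (List.range w.length).map (wGammaLabel w))

/-- The word `w` contains the vincular pattern 1-2̲3̲. -/
def wContains1_23 (w : List ℕ) : Prop :=
  ∃ i j, i < j ∧ j + 1 < w.length ∧
    w.getD i 0 < w.getD j 0 ∧ w.getD j 0 < w.getD (j + 1) 0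

/-- The word `w` contains the vincular pattern 1-3̲2̲. -/
def wContains1_32 (w : List ℕ) : Prop :=
  ∃ i j, i < j ∧ j + 1 < w.length ∧
    w.getD i 0 < w.getD (j + 1) 0 ∧ w.getD (j + 1) 0 < w.getD j 0

/-- The word `w` contains the classical pattern 132. -/
def wContains132 (w : List ℕ) : Prop :=
  ∃ i j k, i < j ∧ j < k ∧ k < w.length ∧
    w.getD i 0 < w.getD k 0 ∧ w.getD k 0 < w.getD j 0

/-- The word `w` contains the consecutive pattern 123. -/
def wContainsC123 (w : List ℕ) : Prop :=
  ∃ i, i + 2 < w.length ∧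
    w.getD i 0 < w.getD (i + 1) 0 ∧ w.getD (i + 1) 0 < w.getD (i + 2) 0

/-- The one-line word of the Foata image `F(π)` of an involution `π`: write `π` in
standard cycle notation (each cycle with its least element first, cycles in
decreasing order of their least elements) and erase the parentheses. -/
def foataWord {n : ℕ} (π : Equiv.Perm (Fin n)) : List ℕ :=
  (((List.range n).reverse).map fun m =>
    if pv π m = m then [m]
    else if m < pv π m then [m, pv π m]
    else ([] : List ℕ)).flatten

/-- The number of long tunnels of `d`: occurrences of factors `U α D` with `α` a
nonempty Motzkin word. -/
def longTunnelCount (d : List Step) : ℕ :=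
  ((Finset.range d.length ×ˢ Finset.range d.length).filter fun ij =>
    ij.1 + 1 < ij.2 ∧ d.getD ij.1 Step.H = Step.U ∧ d.getD ij.2 Step.H = Step.D ∧
    IsMotzkin ((d.drop (ij.1 + 1)).take (ij.2 - ij.1 - 1))).card

/-- The number of weak valleys of `d`: occurrences of the factors `HH, HU, DH, DU`. -/
def weakValleyCount (d : List Step) : ℕ :=
  occFactor [Step.H, Step.H] d + occFactor [Step.H, Step.U] d +
  occFactor [Step.D, Step.H] d + occFactor [Step.D, Step.U] d

end

/-!
A 132 occurrence `π i < π k < π j` (`i < j < k`) can be pushed left until its `1` and `3` are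
adjacent: if `π (j - 1) > π k`, then `(i, j - 1, k)` is again an occurrence. An adjacent pair
`π a < π k < π (a + 1)` is an ascent, so it lies in one ascending run; that run starts below
`π k`, ends above it, and ends before position `k`, since otherwise `π` would increase from
`a + 1` to `k`. Such a run is exactly what the label at the value `π k` counts. Conversely, a
run counted by the label at `v`, together with `v` itself, is an occurrence of 132.
-/

section AscendingRuns

variable {n : ℕ} {π : Equiv.Perm (Fin n)}

variable (π) in
def IsAscRun (p q : Fin n) : Prop :=
  RunStartAt π p ∧ RunEndAt π q ∧ p ≤ q ∧ ∀ r : Fin n, p ≤ r → r < q → ¬ RunEndAt π r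

lemma lt_of_not_runEndAt {r s : Fin n} (hr : ¬ RunEndAt π r) (hrs : (r : ℕ) + 1 = s) :
    π r < π s := by
  by_contra hle
  refine hr fun q hq => ?_
  obtain rfl : q = s := Fin.ext (by omega)
  exact (not_lt.mp hle).lt_of_ne fun h => by rw [π.injective h] at hrs; omega

lemma apply_le_apply_of_forall_not_runEndAt {r s : Fin n} (hrs : r ≤ s)
    (hasc : ∀ t : Fin n, r ≤ t → t < s → ¬ RunEndAt π t) : π r ≤ π s := by
  obtain ⟨m, hm⟩ : ∃ m, (s : ℕ) = r + m := ⟨s - r, by omega⟩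
  induction m generalizing s with
  | zero => exact le_of_eq (congrArg π (Fin.ext (by omega)))
  | succ m ih =>
    set t : Fin n := ⟨r + m, by omega⟩
    have hts : t < s := Fin.lt_def.mpr (by simp [t]; omega)
    have hrt : π r ≤ π t :=
      ih (Fin.le_def.mpr (by simp [t])) (fun u hu hut => hasc u hu (hut.trans hts)) rfl
    exact hrt.trans (lt_of_not_runEndAt (hasc t (Fin.le_def.mpr (by simp [t])) hts)
      (by simp [t]; omega)).le

lemma exists_runStartAt_le (j : Fin n) :
    ∃ p ≤ j, RunStartAt π p ∧ ∀ r : Fin n, p ≤ r → r < j → ¬ RunEndAt π r := by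
  obtain ⟨p, ⟨hpj, hasc⟩, hmin⟩ := wellFounded_lt.has_min
    {p : Fin n | p ≤ j ∧ ∀ r : Fin n, p ≤ r → r < j → ¬ RunEndAt π r}
    ⟨j, le_rfl, fun r hjr hrj => absurd (hjr.trans_lt hrj) (lt_irrefl j)⟩
  refine ⟨p, hpj, fun q hqp => ?_, hasc⟩
  by_contra hnot
  -- then `q` is not a run end either, so the ascending stretch extends to `q < p`
  have hq : ¬ RunEndAt π q := fun hq => hnot (hq p hqp)
  have hqp' : q < p := Fin.lt_def.mpr (by omega)
  refine hmin q ⟨hqp'.le.trans hpj, fun r hqr hrj => ?_⟩ hqp'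
  rcases eq_or_lt_of_le hqr with rfl | hlt
  · exact hq
  · exact hasc r (Fin.le_def.mpr (by rw [Fin.lt_def] at hlt; omega)) hrj

lemma exists_runEndAt_ge (j : Fin n) :
    ∃ q ≥ j, RunEndAt π q ∧ ∀ r : Fin n, j ≤ r → r < q → ¬ RunEndAt π r := by
  obtain ⟨q, ⟨hjq, hasc⟩, hmax⟩ := wellFounded_gt.has_min
    {q : Fin n | j ≤ q ∧ ∀ r : Fin n, j ≤ r → r < q → ¬ RunEndAt π r}
    ⟨j, le_rfl, fun r hjr hrj => absurd (hjr.trans_lt hrj) (lt_irrefl j)⟩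
  refine ⟨q, hjq, ?_, hasc⟩
  by_contra hq
  obtain ⟨s, hs⟩ : ∃ s : Fin n, (q : ℕ) + 1 = s := by
    by_contra! h
    exact hq fun s hs => absurd hs (h s)
  have hqs : q < s := Fin.lt_def.mpr (by omega)
  refine hmax s ⟨hjq.trans hqs.le, fun r hjr hrs => ?_⟩ hqs
  rcases eq_or_lt_of_le (Fin.le_def.mpr (by rw [Fin.lt_def] at hrs; omega) : r ≤ q) with
    rfl | hlt
  · exact hq
  · exact hasc r hjr hlt

lemma exists_isAscRun_of_not_runEndAt {a : Fin n} (ha : ¬ RunEndAt π a) :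
    ∃ p q : Fin n, IsAscRun π p q ∧ p ≤ a ∧ a < q := by
  obtain ⟨p, hpa, hp, hpasc⟩ := exists_runStartAt_le (π := π) a
  obtain ⟨q, haq, hq, hqasc⟩ := exists_runEndAt_ge (π := π) a
  have haq' : a < q := lt_of_le_of_ne haq fun h => ha (h ▸ hq)
  refine ⟨p, q, ⟨hp, hq, hpa.trans haq, fun r hpr hrq => ?_⟩, hpa, haq'⟩
  rcases lt_or_ge r a with hra | har
  · exact hpasc r hpr hra
  · exact hqasc r har hrq

lemma Contains132.exists_adjacent (h : Contains132 π) :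
    ∃ a b k : Fin n, (a : ℕ) + 1 = b ∧ b < k ∧ π a < π k ∧ π k < π b := by
  obtain ⟨i, j, k, hij, hjk, hik, hkj⟩ := h
  obtain ⟨m, hm⟩ : ∃ m, (j : ℕ) = m := ⟨j, rfl⟩
  induction m generalizing j with
  | zero => exact absurd (Fin.lt_def.mp hij) (by omega)
  | succ m ih =>
    set a : Fin n := ⟨m, by omega⟩
    have hak : a < k := Fin.lt_def.mpr (by rw [Fin.lt_def] at hjk; simp [a]; omega)
    rcases lt_or_gt_of_ne (π.injective.ne hak.ne) with hlt | hgt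
    · exact ⟨a, j, k, by simp [a, hm], hjk, hlt, hkj⟩
    · have hia : i < a := by
        refine lt_of_le_of_ne (Fin.le_def.mpr (by rw [Fin.lt_def] at hij; simp [a]; omega)) ?_
        intro hia
        exact lt_asymm hik (by rwa [hia])
      exact ih a hia hak hgt rfl

lemma IsAscRun.apply_le_apply {p q r s : Fin n} (hrun : IsAscRun π p q) (hpr : p ≤ r)
    (hrs : r ≤ s) (hsq : s ≤ q) : π r ≤ π s :=
  apply_le_apply_of_forall_not_runEndAt hrs fun t hrt hts =>
    hrun.2.2.2 t (hpr.trans hrt) (hts.trans_le hsq)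

lemma contains132_iff_exists_isAscRun :
    Contains132 π ↔ ∃ p q k : Fin n, IsAscRun π p q ∧ q < k ∧ π p < π k ∧ π k < π q := by
  constructor
  · intro h
    obtain ⟨a, b, k, hab, hbk, hak, hkb⟩ := h.exists_adjacent
    obtain ⟨p, q, hrun, hpa, haq⟩ :=
      exists_isAscRun_of_not_runEndAt (π := π) fun ha => lt_asymm (ha b hab) (hak.trans hkb)
    have hpb : p ≤ b := hpa.trans (Fin.le_def.mpr (by omega))
    have hbq : b ≤ q := Fin.le_def.mpr (by rw [Fin.lt_def] at haq; omega)
    have hqk : q < k := by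
      by_contra! hkq
      exact (hrun.apply_le_apply hpb hbk.le hkq).not_gt hkb
    exact ⟨p, q, k, hrun, hqk, (hrun.apply_le_apply le_rfl hpa haq.le).trans_lt hak,
      hkb.trans_le (hrun.apply_le_apply hpb hbq le_rfl)⟩
  · rintro ⟨p, q, k, hrun, hqk, hpk, hkq⟩
    refine ⟨p, q, k, lt_of_le_of_ne hrun.2.2.1 ?_, hqk, hpk, hkq⟩
    rintro rfl
    exact lt_asymm hpk hkq

lemma gammaLabel_eq_zero_iff (v : Fin n) :
    gammaLabel π v = 0 ↔
      ∀ p q : Fin n, IsAscRun π p q → π p < v → v < π q → π.symm v ≤ q := by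
  simp only [gammaLabel, IsAscRun, Finset.card_eq_zero, Finset.filter_eq_empty_iff,
    Finset.mem_univ, true_implies, Prod.forall, not_and, not_lt, and_imp]

end AscendingRuns

/-- For `π ∈ S_n` with `Γ(π) = (d, l)`: `π` avoids the classical
pattern 132 if and only if all the labels are `0`. -/
theorem avoids132_iff_labels_zero (n : ℕ) (π : Equiv.Perm (Fin n)) :
    ¬ Contains132 π ↔ ∀ v : Fin n, gammaLabel π v = 0 := by
  simp only [contains132_iff_exists_isAscRun, gammaLabel_eq_zero_iff, not_exists, not_and,
    not_lt]
  constructor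
  · intro h v p q hrun hpv hvq
    by_contra! hqv
    exact (h p q _ hrun hqv (by simpa using hpv)).not_gt (by simpa using hvq)
  · intro h p q k hrun hqk hpk
    by_contra! hkq
    exact (h (π k) p q hrun hpk hkq).not_gt (by simpa using hqk)
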